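/- Let H be an irredundant cover of a finite non-cyclic group G whose size equals the number of maximal cyclic subgroups of G. Then each member of H contains exactly one maximal cyclic subgroup of G. -/

import Mathlib

/-! Irredundance gives every member `H` of the cover an element lying in no other member; a
maximal cyclic subgroup through that element lies in `H` and in no other member. This assigns
injectively to each member a maximal cyclic subgroup, so equality of the two counts makes the
assignment onto: any maximal cyclic subgroup of `H` is assigned to some member, which then must
be `H`. -/

def IsCover {G : Type*} [Group G] (S : Set (Subgroup G)) : Prop :=
  (∀ H ∈ S, H ≠ (⊤ : Subgroup G)) ∧ ∀ g : G, ∃ H ∈ S, g ∈ H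

def IsIrredundantCover {G : Type*} [Group G] (S : Set (Subgroup G)) : Prop :=
  IsCover S ∧ ∀ T : Set (Subgroup G), T ⊂ S → ¬ IsCover T

def IsMaxCyclic {G : Type*} [Group G] (C : Subgroup G) : Prop :=
  IsCyclic C ∧ ∀ D : Subgroup G, IsCyclic D → C ≤ D → C = D

def OnlyOneSizedCovers (G : Type*) [Group G] : Prop :=
  ∀ S T : Set (Subgroup G), IsIrredundantCover S → IsIrredundantCover T →
    S.ncard = T.ncard

section

variable {G : Type*} [Group G]

lemma exists_isMaxCyclic_mem [Finite G] (x : G) : ∃ C : Subgroup G, IsMaxCyclic C ∧ x ∈ C := by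
  obtain ⟨C, hxC, hC⟩ :=
    Finite.exists_le_maximal (p := fun C : Subgroup G => IsCyclic C) (Subgroup.isCyclic_zpowers x)
  exact ⟨C, ⟨hC.prop, fun D hD hCD => le_antisymm hCD (hC.2 hD hCD)⟩,
    hxC (Subgroup.mem_zpowers x)⟩

lemma IsCover.exists_le_of_isCyclic {S : Set (Subgroup G)} (hS : IsCover S) {C : Subgroup G}
    (hC : IsCyclic C) : ∃ H ∈ S, C ≤ H := by
  obtain ⟨g, rfl⟩ := C.isCyclic_iff_exists_zpowers_eq_top.1 hC
  obtain ⟨H, hH, hgH⟩ := hS.2 g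
  exact ⟨H, hH, Subgroup.zpowers_le.2 hgH⟩

lemma IsIrredundantCover.exists_mem_forall_mem_eq {S : Set (Subgroup G)}
    (hS : IsIrredundantCover S) {H : Subgroup G} (hH : H ∈ S) :
    ∃ x ∈ H, ∀ K ∈ S, x ∈ K → K = H := by
  have hnot : ¬ IsCover (S \ {H}) :=
    hS.2 _ (Set.sdiff_singleton_ssubset.2 hH)
  have hproper : ∀ K ∈ S \ {H}, K ≠ ⊤ := fun K hK => hS.1.1 K hK.1
  obtain ⟨x, hx⟩ : ∃ x : G, ∀ K ∈ S, x ∈ K → K = H := by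
    simpa [not_imp_not] using fun hcover => hnot ⟨hproper, hcover⟩
  obtain ⟨K, hK, hxK⟩ := hS.1.2 x
  exact ⟨x, hx K hK hxK ▸ hxK, hx⟩

lemma IsIrredundantCover.exists_isMaxCyclic_le_forall_le_eq [Finite G]
    {S : Set (Subgroup G)} (hS : IsIrredundantCover S) {H : Subgroup G} (hH : H ∈ S) :
    ∃ C, IsMaxCyclic C ∧ C ≤ H ∧ ∀ K ∈ S, C ≤ K → K = H := by
  obtain ⟨x, -, hx⟩ := hS.exists_mem_forall_mem_eq hH
  obtain ⟨C, hC, hxC⟩ := exists_isMaxCyclic_mem x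
  have hConly : ∀ K ∈ S, C ≤ K → K = H := fun K hK hCK => hx K hK (hCK hxC)
  obtain ⟨K, hK, hCK⟩ := hS.1.exists_le_of_isCyclic hC.1
  exact ⟨C, hC, hConly K hK hCK ▸ hCK, hConly⟩

end

theorem stmt2_general (G : Type*) [Group G] [Finite G]
    (S : Set (Subgroup G)) (hS : IsIrredundantCover S)
    (hcard : S.ncard = {C : Subgroup G | IsMaxCyclic C}.ncard) :
    ∀ H ∈ S, ∃! C : Subgroup G, IsMaxCyclic C ∧ C ≤ H := by
  choose! f hfmax hfle hfonly using fun H (hH : H ∈ S) =>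
    hS.exists_isMaxCyclic_le_forall_le_eq hH
  have hinj : Set.InjOn f S := fun H hH H' hH' hHH' =>
    hfonly H' hH' H hH (hHH' ▸ hfle H hH)
  have himage : f '' S = {C : Subgroup G | IsMaxCyclic C} :=
    Set.eq_of_subset_of_ncard_le (Set.image_subset_iff.2 hfmax)
      (by rw [hinj.ncard_image, hcard]) (Set.toFinite _)
  intro H hH
  refine ⟨f H, ⟨hfmax H hH, hfle H hH⟩, fun D ⟨hD, hDH⟩ => ?_⟩
  obtain ⟨H', hH', rfl⟩ : D ∈ f '' S := himage ▸ hD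
  rw [hfonly H' hH' H hH hDH]

theorem stmt2 (G : Type*) [Group G] [Finite G] (hG : ¬ IsCyclic G)
    (S : Set (Subgroup G)) (hS : IsIrredundantCover S)
    (hcard : S.ncard = {C : Subgroup G | IsMaxCyclic C}.ncard) :
    ∀ H ∈ S, ∃! C : Subgroup G, IsMaxCyclic C ∧ C ≤ H :=
  stmt2_general G S hS hcard
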